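/- Fix m ≥ 3 and q ≥ 1. For t ∈ [0, m·q], define F(η) = ∫_{S^{q-1}} (Σ_j η_j x_j²)^{m/2} dx as a function of η = (η_1, ..., η_q) with each η_j ≥ 0. Then for any two indices i ≠ j and fixed c ≥ 0, the function s ↦ F(η with η_i = s, η_j = c - s) is convex on [0, c] (restricted to where both entries lie in the allowed range), because its second derivative equals (m/2)(m/2 - 1) ∫_{S^{q-1}} (Σ_j η_j x_j²)^{(m-4)/2} (x_i² - x_j²)² dx ≥ 0. -/

import Mathlib

/-! Write the integrand as `(B x + s d x) ^ p` with `p = m / 2`, `B x = ∑ₜ η'ₜ xₜ²`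
(`η'` is `η` with `ηᵢ = 0`, `ηⱼ = c`) and `d x = xᵢ² - xⱼ²`: it is affine in `s`, and on the
sphere it lies in `[0, ∑ η + c]` for `s ∈ [0, c]`. Convexity of `r ↦ r ^ p` (`p ≥ 1`) passes to
the integral. For the second derivative we differentiate under the integral sign twice. An affine
function nonnegative at `0` and `c` satisfies `ε |d| ≤ B + s d` on `[ε, c - ε]`, so
`|d| ^ k (B + s d) ^ (p - k) ≤ (B + s d) ^ p / ε ^ k` even when `p - k < 0` (which happens for
`m = 3`); this gives the domination. -/

open MeasureTheory Set Function Filter Topology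

lemma mul_abs_le_add_mul_of_nonneg {b d c s ε : ℝ} (h₀ : 0 ≤ b) (hc : 0 ≤ b + c * d)
    (hεs : ε ≤ s) (hεc : ε ≤ c - s) : ε * |d| ≤ b + s * d := by
  rcases le_total 0 d with hd | hd
  · rw [abs_of_nonneg hd]; nlinarith
  · rw [abs_of_nonpos hd]; nlinarith

lemma pow_abs_mul_rpow_sub_le {g d ε : ℝ} (p : ℝ) (n : ℕ) (hε : 0 < ε) (hg : ε * |d| ≤ g) :
    |d| ^ n * g ^ (p - n) ≤ g ^ p / ε ^ n := by
  have hg₀ : 0 ≤ g := (mul_nonneg hε.le (abs_nonneg d)).trans hg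
  rcases hg₀.eq_or_lt with rfl | hg₀
  · obtain rfl : d = 0 := abs_eq_zero.1 (by nlinarith [abs_nonneg d])
    rcases n with _ | n
    · simp
    · simp only [abs_zero, zero_pow n.succ_ne_zero, zero_mul]
      positivity
  · have hd : |d| ≤ g / ε := by rw [le_div_iff₀ hε]; linarith
    calc |d| ^ n * g ^ (p - n) ≤ (g / ε) ^ n * g ^ (p - n) := by gcongr
      _ = g ^ p / ε ^ n := by
        rw [div_pow, ← Real.rpow_natCast, div_mul_eq_mul_div, ← Real.rpow_add hg₀,
          add_sub_cancel]

lemma hasDerivAt_pow_mul_rpow_affine {b d : ℝ} (p : ℝ) (n : ℕ) {s : ℝ}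
    (h : 0 < b + s * d ∨ d = 0) :
    HasDerivAt (fun s => d ^ n * (b + s * d) ^ (p - n))
      ((p - n) * d ^ (n + 1) * (b + s * d) ^ (p - (n + 1 : ℕ))) s := by
  rcases h with h | rfl
  · have := (((hasDerivAt_mul_const d).const_add b).rpow_const (p := p - n)
      (Or.inl h.ne')).const_mul (d ^ n)
    refine this.congr_deriv ?_
    rw [Nat.cast_succ, ← sub_sub]
    ring
  · simp [hasDerivAt_const]

lemma convexOn_rpow_affine {S : Set ℝ} {b d p : ℝ} (hp : 1 ≤ p) (hS : Convex ℝ S)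
    (h : ∀ s ∈ S, 0 ≤ b + s * d) : ConvexOn ℝ S (fun s => (b + s * d) ^ p) := by
  have hlin : ⇑(AffineMap.lineMap b (b + d) : ℝ →ᵃ[ℝ] ℝ) = fun s => b + s * d := by
    ext s; simp [AffineMap.lineMap_apply_ring']; ring
  have := (convexOn_rpow hp).comp_affineMap (AffineMap.lineMap b (b + d) : ℝ →ᵃ[ℝ] ℝ)
  rw [hlin] at this
  exact this.subset (fun s hs => h s hs) hS

lemma convexOn_integral {α E : Type*} [MeasurableSpace α] {μ : Measure α} [AddCommGroup E]
    [Module ℝ E] {S : Set E} {F : E → α → ℝ} (hS : Convex ℝ S) (hint : ∀ s ∈ S, Integrable (F s) μ)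
    (hF : ∀ᵐ x ∂μ, ConvexOn ℝ S (F · x)) : ConvexOn ℝ S (fun s => ∫ x, F s x ∂μ) := by
  refine ⟨hS, fun s₁ hs₁ s₂ hs₂ a b ha hb hab => ?_⟩
  calc ∫ x, F (a • s₁ + b • s₂) x ∂μ ≤ ∫ x, (a * F s₁ x + b * F s₂ x) ∂μ :=
        integral_mono_ae (hint _ (hS hs₁ hs₂ ha hb hab))
          (((hint s₁ hs₁).const_mul a).add ((hint s₂ hs₂).const_mul b))
          (hF.mono fun x hx => hx.2 hs₁ hs₂ ha hb hab)
    _ = a • ∫ x, F s₁ x ∂μ + b • ∫ x, F s₂ x ∂μ := by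
        rw [integral_add ((hint s₁ hs₁).const_mul a) ((hint s₂ hs₂).const_mul b),
          integral_const_mul, integral_const_mul, smul_eq_mul, smul_eq_mul]

section
variable {α : Type*} [MeasurableSpace α] {μ : Measure α} [IsFiniteMeasure μ]
  {B d : α → ℝ} {c K p : ℝ}

lemma integrable_rpow_affine (hB : Measurable B) (hd : Measurable d) (hp : 0 ≤ p)
    (hg : ∀ᵐ x ∂μ, ∀ s ∈ Icc 0 c, B x + s * d x ∈ Icc 0 K) {s : ℝ} (hs : s ∈ Icc 0 c) :
    Integrable (fun x => (B x + s * d x) ^ p) μ := by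
  refine (integrable_const (K ^ p)).mono' (by fun_prop) ?_
  filter_upwards [hg] with x hx
  obtain ⟨h₀, hK⟩ := hx s hs
  rw [Real.norm_of_nonneg (Real.rpow_nonneg h₀ p)]
  exact Real.rpow_le_rpow h₀ hK hp

lemma hasDerivAt_integral_pow_mul_rpow_affine (hB : Measurable B) (hd : Measurable d)
    (hp : 0 ≤ p) (hg : ∀ᵐ x ∂μ, ∀ s ∈ Icc 0 c, B x + s * d x ∈ Icc 0 K) (n : ℕ) {s₀ : ℝ}
    (hs₀ : s₀ ∈ Ioo 0 c) :
    HasDerivAt (fun s => ∫ x, d x ^ n * (B x + s * d x) ^ (p - n) ∂μ)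
      (∫ x, (p - n) * d x ^ (n + 1) * (B x + s₀ * d x) ^ (p - (n + 1 : ℕ)) ∂μ) s₀ := by
  obtain ⟨ε, hε, hεs₀, hεc⟩ : ∃ ε, 0 < ε ∧ ε < s₀ ∧ ε < c - s₀ := by
    have := lt_min hs₀.1 (sub_pos.2 hs₀.2)
    exact ⟨min s₀ (c - s₀) / 2, by positivity, by linarith [min_le_left s₀ (c - s₀)],
      by linarith [min_le_right s₀ (c - s₀)]⟩
  have hU : Ioo ε (c - ε) ∈ 𝓝 s₀ := Ioo_mem_nhds hεs₀ (by linarith)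
  have hgood : ∀ᵐ x ∂μ, ∀ s ∈ Ioo ε (c - ε),
      B x + s * d x ∈ Icc 0 K ∧ ε * |d x| ≤ B x + s * d x := by
    have hc : 0 ≤ c := hs₀.1.le.trans hs₀.2.le
    filter_upwards [hg] with x hx s hs
    have hsc : s ∈ Icc 0 c := ⟨by linarith [hs.1], by linarith [hs.2]⟩
    exact ⟨hx s hsc, mul_abs_le_add_mul_of_nonneg (by simpa using (hx 0 ⟨le_rfl, hc⟩).1)
      (hx c ⟨hc, le_rfl⟩).1 hs.1.le (by linarith [hs.2])⟩
  have hbound : ∀ᵐ x ∂μ, ∀ s ∈ Ioo ε (c - ε), ∀ k : ℕ,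
      |d x| ^ k * (B x + s * d x) ^ (p - k) ≤ K ^ p / ε ^ k := by
    filter_upwards [hgood] with x hx s hs k
    obtain ⟨⟨h₀, hK⟩, hlow⟩ := hx s hs
    exact (pow_abs_mul_rpow_sub_le p k hε hlow).trans
      (div_le_div_of_nonneg_right (Real.rpow_le_rpow h₀ hK hp) (by positivity))
  refine (hasDerivAt_integral_of_dominated_loc_of_deriv_le hU
    (F := fun s x => d x ^ n * (B x + s * d x) ^ (p - n))
    (F' := fun s x => (p - n) * d x ^ (n + 1) * (B x + s * d x) ^ (p - (n + 1 : ℕ)))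
    (.of_forall fun s => by fun_prop) ?_ (by fun_prop) ?_
    (integrable_const (|p - n| * (K ^ p / ε ^ (n + 1)))) ?_).2
  · refine (integrable_const (K ^ p / ε ^ n)).mono' (by fun_prop) ?_
    filter_upwards [hbound, hgood] with x hx hx'
    rw [norm_mul, norm_pow, Real.norm_eq_abs,
      Real.norm_of_nonneg (Real.rpow_nonneg (hx' s₀ (mem_of_mem_nhds hU)).1.1 _)]
    exact hx s₀ (mem_of_mem_nhds hU) n
  · filter_upwards [hbound, hgood] with x hx hx' s hs
    rw [norm_mul, norm_mul, norm_pow, Real.norm_eq_abs, Real.norm_eq_abs,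
      Real.norm_of_nonneg (Real.rpow_nonneg (hx' s hs).1.1 _), mul_assoc]
    exact mul_le_mul_of_nonneg_left (hx s hs (n + 1)) (abs_nonneg _)
  · filter_upwards [hgood] with x hx s hs
    refine hasDerivAt_pow_mul_rpow_affine p n ?_
    by_cases hd0 : d x = 0
    · exact .inr hd0
    · exact .inl (lt_of_lt_of_le (by positivity) (hx s hs).2)

lemma convexOn_integral_rpow_affine (hB : Measurable B) (hd : Measurable d) (hp : 1 ≤ p)
    (hg : ∀ᵐ x ∂μ, ∀ s ∈ Icc 0 c, B x + s * d x ∈ Icc 0 K) :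
    ConvexOn ℝ (Icc 0 c) (fun s => ∫ x, (B x + s * d x) ^ p ∂μ) :=
  convexOn_integral (convex_Icc 0 c)
    (fun _ hs => integrable_rpow_affine hB hd (by linarith) hg hs)
    (hg.mono fun _ hx => convexOn_rpow_affine hp (convex_Icc 0 c) fun s hs => (hx s hs).1)

lemma deriv_deriv_integral_rpow_affine (hB : Measurable B) (hd : Measurable d) (hp : 0 ≤ p)
    (hg : ∀ᵐ x ∂μ, ∀ s ∈ Icc 0 c, B x + s * d x ∈ Icc 0 K) {s₀ : ℝ} (hs₀ : s₀ ∈ Ioo 0 c) :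
    deriv (deriv fun s => ∫ x, (B x + s * d x) ^ p ∂μ) s₀
      = p * (p - 1) * ∫ x, (B x + s₀ * d x) ^ (p - 2) * d x ^ 2 ∂μ := by
  have hderiv : deriv (fun s => ∫ x, (B x + s * d x) ^ p ∂μ)
      =ᶠ[𝓝 s₀] fun s => p * ∫ x, d x ^ 1 * (B x + s * d x) ^ (p - (1 : ℕ)) ∂μ := by
    filter_upwards [isOpen_Ioo.mem_nhds hs₀] with s hs
    have := hasDerivAt_integral_pow_mul_rpow_affine hB hd hp hg 0 hs
    simp only [pow_zero, one_mul, CharP.cast_eq_zero, sub_zero, zero_add] at this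
    rw [this.deriv, ← integral_const_mul]
    simp only [Nat.cast_one, pow_one, mul_assoc]
  rw [hderiv.deriv_eq,
    ((hasDerivAt_integral_pow_mul_rpow_affine hB hd hp hg 1 hs₀).const_mul p).deriv,
    ← integral_const_mul, ← integral_const_mul]
  congr 1 with x
  push_cast
  ring_nf
end

lemma sum_update_update_mul {ι : Type*} [Fintype ι] [DecidableEq ι] (η y : ι → ℝ) {i j : ι}
    (hij : i ≠ j) (c s : ℝ) :
    ∑ t, update (update η i s) j (c - s) t * y t
      = ∑ t, update (update η i 0) j c t * y t + s * (y i - y j) := by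
  have hpt : ∀ t, update (update η i s) j (c - s) t * y t = update (update η i 0) j c t * y t
      + s * ((if t = i then y t else 0) - if t = j then y t else 0) := by
    intro t
    by_cases htj : t = j
    · subst htj; simp [hij.symm]; ring
    · by_cases hti : t = i
      · subst hti; simp [htj]
      · simp [hti, htj]
  simp only [hpt, Finset.sum_add_distrib, ← Finset.mul_sum, Finset.sum_sub_distrib,
    Finset.sum_ite_eq', Finset.mem_univ, if_true]

lemma update_update_mem_Icc {ι : Type*} [Fintype ι] [DecidableEq ι] {η : ι → ℝ}
    (hη : ∀ t, 0 ≤ η t) (i j : ι) {c s : ℝ} (hs : s ∈ Icc 0 c) (t : ι) :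
    update (update η i s) j (c - s) t ∈ Icc 0 (∑ t, η t + c) := by
  have hsum : 0 ≤ ∑ t, η t := Finset.sum_nonneg fun t _ => hη t
  by_cases htj : t = j
  · subst htj; simp only [update_self, mem_Icc]; constructor <;> linarith [hs.1, hs.2]
  · rw [update_of_ne htj]
    by_cases hti : t = i
    · subst hti; simp only [update_self, mem_Icc]; constructor <;> linarith [hs.1, hs.2]
    · rw [update_of_ne hti]
      exact ⟨hη t, by
        linarith [hs.1, hs.2, Finset.single_le_sum (fun t _ => hη t) (Finset.mem_univ t)]⟩

lemma sum_mul_mem_Icc_of_sum_eq_one {ι : Type*} [Fintype ι] {a y : ι → ℝ} {K : ℝ}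
    (ha : ∀ t, a t ∈ Icc 0 K) (hy : ∀ t, 0 ≤ y t) (hy₁ : ∑ t, y t = 1) :
    ∑ t, a t * y t ∈ Icc 0 K :=
  ⟨Finset.sum_nonneg fun t _ => mul_nonneg (ha t).1 (hy t),
    calc ∑ t, a t * y t ≤ ∑ t, K * y t :=
          Finset.sum_le_sum fun t _ => mul_le_mul_of_nonneg_right (ha t).2 (hy t)
      _ = K := by rw [← Finset.mul_sum, hy₁, mul_one]⟩

lemma EuclideanSpace.sum_sq_eq_one_of_mem_sphere {ι : Type*} [Fintype ι]
    {x : EuclideanSpace ℝ ι} (hx : x ∈ Metric.sphere 0 1) : ∑ t, x t ^ 2 = 1 := by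
  have := EuclideanSpace.norm_sq_eq x
  simp_all [Real.norm_eq_abs, sq_abs]

theorem stmt_4_general (m q : ℕ) (hm : 3 ≤ m)
    (μ : Measure (EuclideanSpace ℝ (Fin q))) [IsFiniteMeasure μ]
    (hsphere : μ (Metric.sphere (0 : EuclideanSpace ℝ (Fin q)) 1)ᶜ = 0)
    (η : Fin q → ℝ) (hη : ∀ t, 0 ≤ η t) (i j : Fin q) (hij : i ≠ j) (c : ℝ) :
    ConvexOn ℝ (Set.Icc 0 c)
      (fun s : ℝ => ∫ x, (∑ t, Function.update (Function.update η i s) j (c - s) t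
          * (x t) ^ 2) ^ ((m : ℝ) / 2) ∂μ) ∧
    (∀ s ∈ Set.Ioo (0 : ℝ) c,
      deriv (deriv (fun s : ℝ => ∫ x, (∑ t, Function.update (Function.update η i s) j (c - s) t
          * (x t) ^ 2) ^ ((m : ℝ) / 2) ∂μ)) s
        = ((m : ℝ) / 2) * ((m : ℝ) / 2 - 1) *
            ∫ x, (∑ t, Function.update (Function.update η i s) j (c - s) t * (x t) ^ 2)
                ^ (((m : ℝ) - 4) / 2) * ((x i) ^ 2 - (x j) ^ 2) ^ 2 ∂μ) := by
  simp only [sum_update_update_mul _ _ hij]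
  have hB : Measurable fun x : EuclideanSpace ℝ (Fin q) =>
      ∑ t, update (update η i 0) j c t * x t ^ 2 := by fun_prop
  have hd : Measurable fun x : EuclideanSpace ℝ (Fin q) => x i ^ 2 - x j ^ 2 := by fun_prop
  have hp : 1 ≤ (m : ℝ) / 2 := by
    rw [le_div_iff₀ two_pos]; exact_mod_cast (by omega : 1 * 2 ≤ m)
  have hg : ∀ᵐ x ∂μ, ∀ s ∈ Icc 0 c, ∑ t, update (update η i 0) j c t * x t ^ 2
      + s * (x i ^ 2 - x j ^ 2) ∈ Icc 0 (∑ t, η t + c) := by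
    filter_upwards [measure_eq_zero_iff_ae_notMem.1 hsphere] with x hx s hs
    rw [← sum_update_update_mul _ _ hij]
    exact sum_mul_mem_Icc_of_sum_eq_one (update_update_mem_Icc hη i j hs) (fun t => sq_nonneg _)
      (EuclideanSpace.sum_sq_eq_one_of_mem_sphere (by simpa using hx))
  refine ⟨convexOn_integral_rpow_affine hB hd hp hg, fun s hs => ?_⟩
  rw [deriv_deriv_integral_rpow_affine hB hd (by linarith) hg hs]
  congr 3 with x
  ring_nf

/-- For `m ≥ 3`, `η_j ≥ 0`, indices `i ≠ j` and `c ≥ 0`, the function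
`s ↦ F(η with η_i = s, η_j = c - s)`, where
`F(η) = ∫_{S^{q-1}} (Σ_t η_t x_t²)^{m/2} dx`, is convex on `[0, c]`, its second
derivative being `(m/2)(m/2 - 1) ∫ (Σ_t η_t x_t²)^{(m-4)/2} (x_i² - x_j²)² dx ≥ 0`. -/
theorem stmt_4 (m q : ℕ) (hm : 3 ≤ m) (hq : 1 ≤ q)
    (μ : Measure (EuclideanSpace ℝ (Fin q))) [IsFiniteMeasure μ]
    (hinv : ∀ g : EuclideanSpace ℝ (Fin q) ≃ₗᵢ[ℝ] EuclideanSpace ℝ (Fin q), μ.map g = μ)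
    (hsphere : μ (Metric.sphere (0 : EuclideanSpace ℝ (Fin q)) 1)ᶜ = 0)
    (η : Fin q → ℝ) (hη : ∀ t, 0 ≤ η t) (i j : Fin q) (hij : i ≠ j) (c : ℝ) (hc : 0 ≤ c) :
    ConvexOn ℝ (Set.Icc 0 c)
      (fun s : ℝ => ∫ x, (∑ t, Function.update (Function.update η i s) j (c - s) t
          * (x t) ^ 2) ^ ((m : ℝ) / 2) ∂μ) ∧
    (∀ s ∈ Set.Ioo (0 : ℝ) c,
      deriv (deriv (fun s : ℝ => ∫ x, (∑ t, Function.update (Function.update η i s) j (c - s) t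
          * (x t) ^ 2) ^ ((m : ℝ) / 2) ∂μ)) s
        = ((m : ℝ) / 2) * ((m : ℝ) / 2 - 1) *
            ∫ x, (∑ t, Function.update (Function.update η i s) j (c - s) t * (x t) ^ 2)
                ^ (((m : ℝ) - 4) / 2) * ((x i) ^ 2 - (x j) ^ 2) ^ 2 ∂μ) :=
  stmt_4_general m q hm μ hsphere η hη i j hij c
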